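/- The induction rule (R3) is sound: if φ ⊃ K_G(ψ ∧ φ) is valid in a group frame, then φ ⊃ K*_G ψ is valid in that frame. -/

import Mathlib

inductive Fm (V Ag : Type) : Type
  | var : V → Fm V Ag
  | snot : Fm V Ag → Fm V Ag
  | and : Fm V Ag → Fm V Ag → Fm V Ag
  | or : Fm V Ag → Fm V Ag → Fm V Ag
  | imp : Fm V Ag → Fm V Ag → Fm V Ag
  | K : Set Ag → Fm V Ag → Fm V Ag
  | Ks : Set Ag → Fm V Ag → Fm V Ag

/-- A group frame: reflexive epistemic relations and a Routley star of period two. -/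
structure GroupFrame (S Ag : Type) where
  R : Ag → S → S → Prop
  refl : ∀ a x, R a x x
  star : S → S
  star_star : ∀ x, star (star x) = x

/-- `R_G`: union of the relations of the agents in `G`. -/
def RG {S Ag : Type} (F : GroupFrame S Ag) (G : Set Ag) (x y : S) : Prop :=
  ∃ a ∈ G, F.R a x y

/-- Satisfaction in a group model. -/
def sat {S Ag V : Type} (F : GroupFrame S Ag) (v : V → Set S) : S → Fm V Ag → Prop
  | x, .var p => x ∈ v p
  | x, .snot φ => ¬ sat F v (F.star x) φ
  | x, .and φ ψ => sat F v x φ ∧ sat F v x ψ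
  | x, .or φ ψ => sat F v x φ ∨ sat F v x ψ
  | x, .imp φ ψ => sat F v x φ → sat F v x ψ
  | x, .K G φ => ∀ y, RG F G x y → sat F v y φ
  | x, .Ks G φ => ∀ y, Relation.ReflTransGen (RG F G) x y → sat F v y φ

/-- Validity in a group frame: satisfaction at every situation under every valuation. -/
def valid {S Ag V : Type} (F : GroupFrame S Ag) (φ : Fm V Ag) : Prop :=
  ∀ (v : V → Set S) (x : S), sat F v x φ

theorem Relation.ReflTransGen.of_step_invariant {α : Type*} {r : α → α → Prop} {P Q : α → Prop}
    (hr : ∀ x, r x x) (hstep : ∀ x, P x → ∀ y, r x y → Q y ∧ P y) {x y : α}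
    (hx : P x) (hxy : Relation.ReflTransGen r x y) : Q y := by
  have hPy : P y := by
    induction hxy with
    | refl => exact hx
    | tail _ hzw ih => exact (hstep _ ih _ hzw).2
  exact (hstep y hPy y (hr y)).1

theorem RG_refl {S Ag : Type} (F : GroupFrame S Ag) {G : Set Ag} (hG : G.Nonempty) (x : S) :
    RG F G x x :=
  ⟨hG.some, hG.some_mem, F.refl _ x⟩

/-- the induction rule (R3) is sound. -/
theorem stmt8 {S Ag V : Type} (F : GroupFrame S Ag) (G : Set Ag) (hG : G.Nonempty)
    (φ ψ : Fm V Ag)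
    (h : valid F (Fm.imp φ (Fm.K G (Fm.and ψ φ)))) :
    valid F (Fm.imp φ (Fm.Ks G ψ)) :=
  fun v _ hφ _ hxy =>
    Relation.ReflTransGen.of_step_invariant (RG_refl F hG) (h v) hφ hxy
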